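/- arXiv:math/0610909 — 4 statements merged into one kernel-verified Lean document; each statement's English description precedes it below -/
import Mathlib

section
/- Let a > 0, β > 0, and consider f(u,v) = 2(β+1)u² + (3(β+2)−2a²)uv + (β+2)a²v² as a quadratic form in u = |x|⁴ and v = t². Then f(u,v) > 0 for all (u,v) ≠ (0,0) with u,v ≥ 0 if and only if a² < C_β, where C_β = ((β+2)/2)·(2β+5+√((2β+5)²−9)). -/
theorem stmt2 (a β : ℝ) (ha : 0 < a) (hβ : 0 < β) :
    (∀ u v : ℝ, 0 ≤ u → 0 ≤ v → ¬(u = 0 ∧ v = 0) →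
        0 < 2 * (β + 1) * u ^ 2 + (3 * (β + 2) - 2 * a ^ 2) * u * v + (β + 2) * a ^ 2 * v ^ 2)
      ↔ a ^ 2 < ((β + 2) / 2) * (2 * β + 5 + Real.sqrt ((2 * β + 5) ^ 2 - 9)) := by
  set q := Real.sqrt ((2 * β + 5) ^ 2 - 9) with hqdef
  have hD : (0:ℝ) ≤ (2 * β + 5) ^ 2 - 9 := by nlinarith
  have hq2 : q ^ 2 = (2 * β + 5) ^ 2 - 9 := Real.sq_sqrt hD
  have hq0 : 0 ≤ q := Real.sqrt_nonneg _
  have hq3 : 2 * β + 2 ≤ q := by nlinarith [hq2, hq0, sq_nonneg (q - (2 * β + 2))]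
  constructor
  · intro h
    by_contra hc
    push_neg at hc
    have hu : (0:ℝ) ≤ 2 * a ^ 2 - 3 * (β + 2) := by nlinarith [mul_nonneg hq0 (show (0:ℝ) ≤ β + 2 by linarith)]
    have hv : (0:ℝ) ≤ 4 * (β + 1) := by linarith
    have key := h (2 * a ^ 2 - 3 * (β + 2)) (4 * (β + 1)) hu hv
      (fun ⟨h1, h2⟩ => by linarith)
    have hdisc : (3 * (β + 2) - 2 * a ^ 2) ^ 2 - 8 * (β + 1) * (β + 2) * a ^ 2 ≥ 0 := by
      nlinarith [mul_nonneg
        (show (0:ℝ) ≤ a ^ 2 - ((β + 2) / 2) * (2 * β + 5 - q) by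
          nlinarith [mul_nonneg hq0 (show (0:ℝ) ≤ β + 2 by linarith)])
        (show (0:ℝ) ≤ a ^ 2 - ((β + 2) / 2) * (2 * β + 5 + q) by linarith)]
    nlinarith [key, mul_nonneg (show (0:ℝ) ≤ β + 1 by linarith) hdisc]
  · intro hs u v hu hv hne
    rcases eq_or_lt_of_le hu with hu0 | hu0
    · rcases eq_or_lt_of_le hv with hv0 | hv0
      · exact absurd ⟨hu0.symm, hv0.symm⟩ hne
      · subst hu0
        nlinarith [mul_pos (show (0:ℝ) < β + 2 by linarith) (mul_pos (pow_pos ha 2) (pow_pos hv0 2))]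
    · rcases eq_or_lt_of_le hv with hv0 | hv0
      · subst hv0
        nlinarith [mul_pos hu0 hu0]
      · by_cases hB : 0 ≤ 3 * (β + 2) - 2 * a ^ 2
        · nlinarith [mul_pos (show (0:ℝ) < 2 * (β + 1) by linarith) (pow_pos hu0 2),
            mul_nonneg (mul_nonneg hB hu0.le) hv0.le,
            mul_nonneg (mul_nonneg (show (0:ℝ) ≤ β + 2 by linarith) (sq_nonneg a)) (sq_nonneg v)]
        · push_neg at hB
          have hdisc : (3 * (β + 2) - 2 * a ^ 2) ^ 2 - 8 * (β + 1) * (β + 2) * a ^ 2 < 0 := by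
            nlinarith [mul_pos
              (show (0:ℝ) < a ^ 2 - ((β + 2) / 2) * (2 * β + 5 - q) by nlinarith [hq3])
              (show (0:ℝ) < ((β + 2) / 2) * (2 * β + 5 + q) - a ^ 2 by linarith)]
          nlinarith [sq_nonneg (4 * (β + 1) * u + (3 * (β + 2) - 2 * a ^ 2) * v),
            mul_pos (show (0:ℝ) < 8 * (β + 1) * (β + 2) * a ^ 2 - (3 * (β + 2) - 2 * a ^ 2) ^ 2 by linarith)
              (mul_pos hv0 hv0)]
end

section
/- Let C = |x|² I + a t J and D = x x^t on ℝ^{2n}, with J the standard symplectic matrix. Then det(C + 2D) = (|x|⁴ + a²t²)^{n−1}(3|x|⁴ + a²t²). -/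
/-!
Write `s = |x|²` and `w = a t`, so that `C = s I + w J`. Since `J² = -1`, `C` has inverse
`(s I - w J) / (s² + w²)`, and `det C = (s² + w²)ⁿ` (a Schur complement computation for `s ≠ 0`,
extended to `s = 0` by continuity). As `J` is skew, `xᵗ J x = 0`, so the matrix determinant lemma
gives `det (C + 2 x xᵗ) = det C · (1 + 2 s² / (s² + w²)) = (s² + w²)ⁿ⁻¹ (3 s² + w²)`.
When `s² + w² = 0`, both `x` and `w` vanish and both sides are `0`.
-/

open Matrix

namespace Matrix

variable {l R : Type*}

theorem smul_one_add_smul_fromBlocks [DecidableEq l] [Ring R] (s w : R) :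
    (s • 1 + w • fromBlocks 0 1 (-1) 0 : Matrix (l ⊕ l) (l ⊕ l) R) =
      fromBlocks (s • 1) (w • 1) (-w • 1) (s • 1) := by
  rw [← fromBlocks_one, fromBlocks_smul, fromBlocks_smul, fromBlocks_add]
  simp

theorem fromBlocks_zero_one_neg_one_zero_eq_neg_J [DecidableEq l] [CommRing R] :
    (fromBlocks 0 1 (-1) 0 : Matrix (l ⊕ l) (l ⊕ l) R) = -J l R := by
  simp [J, fromBlocks_neg]

variable [Fintype l]

theorem dotProduct_mulVec_self_eq_zero_of_transpose_eq_neg [CommRing R] [IsAddTorsionFree R]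
    {K : Matrix l l R} (hK : Kᵀ = -K) (x : l → R) : x ⬝ᵥ K *ᵥ x = 0 := by
  refine self_eq_neg.mp ?_
  calc x ⬝ᵥ K *ᵥ x = x ⬝ᵥ Kᵀ *ᵥ x := by
        rw [dotProduct_mulVec, mulVec_transpose, dotProduct_comm]
    _ = -(x ⬝ᵥ K *ᵥ x) := by rw [hK, neg_mulVec, dotProduct_neg]

variable [DecidableEq l]

theorem det_add_vecMulVec [CommRing R] {A : Matrix l l R} (hA : IsUnit A.det) (u v : l → R) :
    (A + vecMulVec u v).det = A.det * (1 + v ⬝ᵥ A⁻¹ *ᵥ u) := by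
  have : A + vecMulVec u v = A * (1 + vecMulVec (A⁻¹ *ᵥ u) v) := by
    rw [Matrix.mul_add, Matrix.mul_one, mul_vecMulVec, mulVec_mulVec, mul_nonsing_inv A hA,
      one_mulVec]
  rw [this, det_mul, vecMulVec_eq Unit, det_one_add_replicateCol_mul_replicateRow]

theorem smul_one_add_smul_mul_inv_smul_smul_one_sub_smul [Field R] {K : Matrix l l R}
    (hK : K * K = -1) {s w : R} (h : s ^ 2 + w ^ 2 ≠ 0) :
    (s • 1 + w • K) * ((s ^ 2 + w ^ 2)⁻¹ • (s • 1 - w • K)) = 1 := by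
  have : (s • 1 + w • K) * (s • 1 - w • K) = (s ^ 2 + w ^ 2) • (1 : Matrix l l R) := by
    simp only [Matrix.add_mul, Matrix.mul_sub, Matrix.mul_one, Matrix.one_mul, Matrix.mul_smul,
      Matrix.smul_mul, hK, smul_neg]
    module
  rw [Matrix.mul_smul, this, smul_smul, inv_mul_cancel₀ h, one_smul]

theorem det_smul_one_add_smul_add_smul_vecMulVec_self [Field R] [IsAddTorsionFree R]
    {K : Matrix l l R} (hK : K * K = -1) (hKt : Kᵀ = -K) {s w : R} (h : s ^ 2 + w ^ 2 ≠ 0)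
    (c : R) (x : l → R) :
    (s • 1 + w • K + c • vecMulVec x x).det =
      (s • 1 + w • K).det * (1 + c * s * (x ⬝ᵥ x) / (s ^ 2 + w ^ 2)) := by
  have hinv := smul_one_add_smul_mul_inv_smul_smul_one_sub_smul hK h
  rw [← vecMulVec_smul, det_add_vecMulVec (isUnit_det_of_right_inverse hinv),
    inv_eq_right_inv hinv]
  simp only [smul_mulVec, sub_mulVec, one_mulVec, dotProduct_smul, smul_dotProduct,
    dotProduct_sub, dotProduct_mulVec_self_eq_zero_of_transpose_eq_neg hKt, smul_eq_mul]
  ring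

theorem det_smul_one_add_smul_fromBlocks_of_ne_zero [Field R] {s : R} (hs : s ≠ 0) (w : R) :
    (s • 1 + w • fromBlocks 0 1 (-1) 0 : Matrix (l ⊕ l) (l ⊕ l) R).det =
      (s ^ 2 + w ^ 2) ^ Fintype.card l := by
  let : Invertible (s • 1 : Matrix l l R) :=
    ⟨s⁻¹ • 1, by simp [smul_smul, hs], by simp [smul_smul, hs]⟩
  have hSchur : w • 1 * ⅟(s • 1 : Matrix l l R) * (-w • 1) = -(w ^ 2 / s) • 1 := by
    change w • 1 * (s⁻¹ • 1 : Matrix l l R) * (-w • 1) = _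
    simp only [Matrix.smul_mul, Matrix.mul_smul, Matrix.one_mul, smul_smul]
    congr 1
    field_simp
  rw [smul_one_add_smul_fromBlocks, det_fromBlocks₂₂, hSchur, ← sub_smul, det_smul, det_smul,
    det_one, mul_one, mul_one, ← mul_pow]
  congr 1
  field_simp
  ring

theorem det_smul_one_add_smul_fromBlocks (s w : ℝ) :
    (s • 1 + w • fromBlocks 0 1 (-1) 0 : Matrix (l ⊕ l) (l ⊕ l) ℝ).det =
      (s ^ 2 + w ^ 2) ^ Fintype.card l :=
  congrFun (Continuous.ext_on (dense_compl_singleton 0) (by fun_prop) (by fun_prop)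
    fun _ hs => det_smul_one_add_smul_fromBlocks_of_ne_zero hs w) s

end Matrix

theorem stmt10_general (n : ℕ) (hn : 1 ≤ n) (x : (Fin n ⊕ Fin n) → ℝ) (t a : ℝ) :
    let J : Matrix (Fin n ⊕ Fin n) (Fin n ⊕ Fin n) ℝ := Matrix.fromBlocks 0 1 (-1) 0
    let C : Matrix (Fin n ⊕ Fin n) (Fin n ⊕ Fin n) ℝ := (∑ i, x i ^ 2) • (1 : Matrix _ _ ℝ) + (a * t) • J
    let D : Matrix (Fin n ⊕ Fin n) (Fin n ⊕ Fin n) ℝ := Matrix.vecMulVec x x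
    (C + 2 • D).det
      = ((∑ i, x i ^ 2) ^ 2 + a ^ 2 * t ^ 2) ^ (n - 1) *
          (3 * (∑ i, x i ^ 2) ^ 2 + a ^ 2 * t ^ 2) := by
  intro J C D
  set s := ∑ i, x i ^ 2
  have hxx : x ⬝ᵥ x = s := by simp [s, dotProduct, sq]
  have hJ : J = -Matrix.J (Fin n) ℝ := fromBlocks_zero_one_neg_one_zero_eq_neg_J
  have hJJ : J * J = -1 := by rw [hJ, neg_mul_neg, J_squared]
  have hJt : Jᵀ = -J := by rw [hJ, transpose_neg, J_transpose]
  have hdetC : C.det = (s ^ 2 + (a * t) ^ 2) ^ n := by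
    simpa using det_smul_one_add_smul_fromBlocks (l := Fin n) s (a * t)
  rw [← mul_pow]
  obtain hk | hk := eq_or_ne (s ^ 2 + (a * t) ^ 2) 0
  · obtain ⟨hs, hw⟩ : s = 0 ∧ a * t = 0 :=
      mul_self_add_mul_self_eq_zero.mp (by simpa only [sq] using hk)
    have hx : x = 0 := dotProduct_self_eq_zero.mp (hxx.trans hs)
    have : Nonempty (Fin n ⊕ Fin n) := ⟨.inl ⟨0, hn⟩⟩
    simp [C, D, hs, hw, hx]
  · rw [two_smul, ← two_smul ℝ, det_smul_one_add_smul_add_smul_vecMulVec_self hJJ hJt hk, hdetC,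
      hxx]
    obtain ⟨m, rfl⟩ := Nat.exists_eq_add_of_le' hn
    rw [Nat.add_sub_cancel, pow_succ, mul_assoc, mul_add, mul_one, mul_div_cancel₀ _ hk]
    ring

theorem stmt10 (n : ℕ) (hn : 1 ≤ n) (x : (Fin n ⊕ Fin n) → ℝ) (t a : ℝ)
    (hxt : x ≠ 0 ∨ t ≠ 0) :
    let J : Matrix (Fin n ⊕ Fin n) (Fin n ⊕ Fin n) ℝ := Matrix.fromBlocks 0 1 (-1) 0
    let C : Matrix (Fin n ⊕ Fin n) (Fin n ⊕ Fin n) ℝ := (∑ i, x i ^ 2) • (1 : Matrix _ _ ℝ) + (a * t) • J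
    let D : Matrix (Fin n ⊕ Fin n) (Fin n ⊕ Fin n) ℝ := Matrix.vecMulVec x x
    (C + 2 • D).det
      = ((∑ i, x i ^ 2) ^ 2 + a ^ 2 * t ^ 2) ^ (n - 1) *
          (3 * (∑ i, x i ^ 2) ^ 2 + a ^ 2 * t ^ 2) :=
  stmt10_general n hn x t a
end

section
/- Let n = 1 and suppose a² ≤ 1. With φ₂(x,t) = (x₁²+x₂² + √((x₁²+x₂²)²+4t²))/2 and 𝒜 = φ₂^{−1} + φ₂^{−3}t², one has 2𝒜φ₂³ − 2𝒜φ₂ a x₁x₂ t − (x₁²+x₂²)² ≥ 𝒜φ₂(x₁²+x₂²)(φ₂ − |a t|) ≥ 0 for all (x₁,x₂,t) ≠ 0. -/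
set_option maxHeartbeats 1000000


theorem stmt15 (a x₁ x₂ t : ℝ) (ha : a ^ 2 ≤ 1) (hxt : ¬(x₁ = 0 ∧ x₂ = 0 ∧ t = 0)) :
    let φ : ℝ := ((x₁ ^ 2 + x₂ ^ 2) + Real.sqrt ((x₁ ^ 2 + x₂ ^ 2) ^ 2 + 4 * t ^ 2)) / 2
    let A : ℝ := φ⁻¹ + φ⁻¹ ^ 3 * t ^ 2
    A * φ * (x₁ ^ 2 + x₂ ^ 2) * (φ - |a * t|)
        ≤ 2 * A * φ ^ 3 - 2 * A * φ * a * x₁ * x₂ * t - (x₁ ^ 2 + x₂ ^ 2) ^ 2 ∧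
      0 ≤ A * φ * (x₁ ^ 2 + x₂ ^ 2) * (φ - |a * t|) := by
  intro φ A
  have hφdef : φ = ((x₁ ^ 2 + x₂ ^ 2) + Real.sqrt ((x₁ ^ 2 + x₂ ^ 2) ^ 2 + 4 * t ^ 2)) / 2 :=
    rfl
  have hAdef : A = φ⁻¹ + φ⁻¹ ^ 3 * t ^ 2 := rfl
  clear_value φ A
  set r : ℝ := x₁ ^ 2 + x₂ ^ 2 with hr_def
  set s : ℝ := Real.sqrt (r ^ 2 + 4 * t ^ 2) with hs_def
  have hr : 0 ≤ r := by positivity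
  have hs0 : 0 ≤ s := Real.sqrt_nonneg _
  have hs2 : s ^ 2 = r ^ 2 + 4 * t ^ 2 := Real.sq_sqrt (by positivity)
  have hsr : r ≤ s := by
    nlinarith [hs2, hs0, hr]
  have hst : 2 * |t| ≤ s := by
    nlinarith [hs2, hs0, abs_nonneg t, sq_abs t]
  have hφpos : 0 < φ := by
    rcases lt_or_eq_of_le hr with h | h
    · rw [hφdef]; nlinarith
    · have hx1 : x₁ = 0 := by nlinarith [sq_nonneg x₁, sq_nonneg x₂]
      have hx2 : x₂ = 0 := by nlinarith [sq_nonneg x₁, sq_nonneg x₂]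
      have ht : t ≠ 0 := fun h' => hxt ⟨hx1, hx2, h'⟩
      have : 0 < |t| := abs_pos.mpr ht
      rw [hφdef]; nlinarith
  have hφ2 : φ ^ 2 = r * φ + t ^ 2 := by
    rw [hφdef]; nlinarith [hs2]
  have hφt : |t| ≤ φ := by
    rw [hφdef]; nlinarith
  have ha1 : |a| ≤ 1 := by
    nlinarith [abs_nonneg a, sq_abs a]
  have hat : |a * t| ≤ φ := by
    rw [abs_mul]
    calc |a| * |t| ≤ |t| := mul_le_of_le_one_left (abs_nonneg t) ha1
    _ ≤ φ := hφt
  have hu0 : 0 ≤ |a * t| := abs_nonneg _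
  have hφne : φ ≠ 0 := ne_of_gt hφpos
  have hAφ3 : A * φ ^ 3 = φ ^ 2 + t ^ 2 := by
    rw [hAdef]; field_simp
  have hApos : 0 < A := by
    rw [hAdef]; positivity
  have habs : 2 * a * x₁ * x₂ * t ≤ r * |a * t| := by
    have h1 : |2 * a * x₁ * x₂ * t| = 2 * (|x₁| * |x₂|) * |a * t| := by
      rw [show 2 * a * x₁ * x₂ * t = 2 * (x₁ * x₂) * (a * t) by ring, abs_mul, abs_mul,
        abs_mul]
      simp
    have h2 : 2 * a * x₁ * x₂ * t ≤ |2 * a * x₁ * x₂ * t| := le_abs_self _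
    have h3 : 2 * (|x₁| * |x₂|) ≤ r := by
      rw [hr_def]
      nlinarith [sq_nonneg (|x₁| - |x₂|), sq_abs x₁, sq_abs x₂]
    nlinarith [abs_nonneg (a * t)]
  constructor
  · -- main inequality
    have hid : (2 * A * φ ^ 3 - 2 * A * φ * a * x₁ * x₂ * t - r ^ 2
          - A * φ * r * (φ - |a * t|)) * φ ^ 2
        = 4 * t ^ 2 * r * φ + 4 * t ^ 4
          + (φ ^ 2 + t ^ 2) * (r * |a * t| - 2 * a * x₁ * x₂ * t) := by
      linear_combination (2 * φ ^ 2 - 2 * a * x₁ * x₂ * t - r * φ + r * |a * t|) * hAφ3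
        + (2 * φ ^ 2 + r * φ + 4 * t ^ 2) * hφ2
    have hRHS : 0 ≤ 4 * t ^ 2 * r * φ + 4 * t ^ 4
        + (φ ^ 2 + t ^ 2) * (r * |a * t| - 2 * a * x₁ * x₂ * t) := by
      have h1 : 0 ≤ r * |a * t| - 2 * a * x₁ * x₂ * t := by linarith
      have h2 : (0:ℝ) ≤ φ ^ 2 + t ^ 2 := by positivity
      nlinarith [mul_nonneg h2 h1, sq_nonneg t]
    nlinarith [hid, hRHS, sq_nonneg φ, mul_pos hφpos hφpos]
  · -- nonnegativity
    have : 0 ≤ φ - |a * t| := by linarith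
    positivity
end

section
/- Let n = 1 and consider φ₃(x,t) = x₁⁴ + x₂⁴ + t². The polynomial g(x,t) = 6(β+1)φ₃ x₁²x₂² + (β+2)t⁴ + 3(β+4)x₁²x₂²t² − 2(x₁⁴+x₂⁴)t² vanishes identically along the lines {(x₁,0,0)} and {(0,x₂,0)}, but g is not nonnegative everywhere: e.g. along x₁ = x₂ = 0 with t ≠ 0 it equals (β+2)t⁴ > 0, while at points with x₁x₂ = 0 and t ≠ 0, x ≠ 0, g(x,t) = (β+2)t⁴ − 2(x₁⁴+x₂⁴)t², which is negative when x₁⁴+x₂⁴ > (β+2)t²/2. -/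
/-- `g` is, up to a nonzero factor, the determinant of the mixed Hessian of
`φ₃^{-β/4}` on `H¹_a`, where `φ₃(x,t) = x₁⁴ + x₂⁴ + t²`. -/
noncomputable def g (β x₁ x₂ t : ℝ) : ℝ :=
  6 * (β + 1) * (x₁ ^ 4 + x₂ ^ 4 + t ^ 2) * x₁ ^ 2 * x₂ ^ 2 + (β + 2) * t ^ 4
    + 3 * (β + 4) * x₁ ^ 2 * x₂ ^ 2 * t ^ 2 - 2 * (x₁ ^ 4 + x₂ ^ 4) * t ^ 2

theorem stmt18 (β : ℝ) (hβ : 0 < β) :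
    (∀ x₁ : ℝ, g β x₁ 0 0 = 0) ∧
    (∀ x₂ : ℝ, g β 0 x₂ 0 = 0) ∧
    (∀ t : ℝ, t ≠ 0 → g β 0 0 t = (β + 2) * t ^ 4 ∧ 0 < (β + 2) * t ^ 4) ∧
    (∀ x₁ x₂ t : ℝ, x₁ * x₂ = 0 →
      g β x₁ x₂ t = (β + 2) * t ^ 4 - 2 * (x₁ ^ 4 + x₂ ^ 4) * t ^ 2) ∧
    (∀ x₁ x₂ t : ℝ, x₁ * x₂ = 0 → t ≠ 0 → (β + 2) * t ^ 2 / 2 < x₁ ^ 4 + x₂ ^ 4 →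
      g β x₁ x₂ t < 0) := by
  have key : ∀ x₁ x₂ t : ℝ, x₁ * x₂ = 0 →
      g β x₁ x₂ t = (β + 2) * t ^ 4 - 2 * (x₁ ^ 4 + x₂ ^ 4) * t ^ 2 := by
    intro x₁ x₂ t h
    have h2 : x₁ ^ 2 * x₂ ^ 2 = 0 := by
      rcases mul_eq_zero.mp h with h | h <;> simp [h]
    simp only [g]
    linear_combination (6 * (β + 1) * (x₁ ^ 4 + x₂ ^ 4 + t ^ 2) + 3 * (β + 4) * t ^ 2) * h2
  refine ⟨?_, ?_, ?_, key, ?_⟩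
  · intro x₁; simp [g]
  · intro x₂; simp [g]
  · intro t ht
    constructor
    · simp [g]
    · have : 0 < t ^ 4 := by positivity
      nlinarith
  · intro x₁ x₂ t h ht hlt
    rw [key _ _ _ h]
    have ht2 : 0 < t ^ 2 := by positivity
    nlinarith
end
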